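/- Let A, B be n×n complex positive definite matrices. For every t ∈ (0, 1): |(A ◇_t B)^{1/2} A^{1/2}| ≥ A ◇_t |B^{1/2} A^{1/2}| in the Loewner order, where |X| = (X*X)^{1/2}. -/

import Mathlib

open scoped ComplexOrder Matrix

noncomputable section

/-- Real power of a (positive definite) matrix via the continuous functional calculus. -/
def mpow {n : ℕ} (A : Matrix (Fin n) (Fin n) ℂ) (t : ℝ) : Matrix (Fin n) (Fin n) ℂ :=
  cfc (fun x : ℝ => x ^ t) A

/-- The matrix logarithm of a (positive definite) matrix via the continuous functional calculus. -/
def mlog {n : ℕ} (A : Matrix (Fin n) (Fin n) ℂ) : Matrix (Fin n) (Fin n) ℂ :=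
  cfc Real.log A

/-- The metric geometric mean `A ♯ₜ B = A^{1/2} (A^{-1/2} B A^{-1/2})^t A^{1/2}`.
`A ♯ B` is `gmean A B (1/2)`. -/
def gmean {n : ℕ} (A B : Matrix (Fin n) (Fin n) ℂ) (t : ℝ) : Matrix (Fin n) (Fin n) ℂ :=
  mpow A (1/2) * mpow (mpow A (-(1/2)) * B * mpow A (-(1/2))) t * mpow A (1/2)

/-- The Loewner order: `A ≤ B` iff `B - A` is positive semidefinite. -/
def LoewnerLE {n : ℕ} (A B : Matrix (Fin n) (Fin n) ℂ) : Prop :=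
  (B - A).PosSemidef

/-- The near order: `A ⪯ B` iff `I ≤ A⁻¹ ♯ B` in the Loewner order. -/
def NearLE {n : ℕ} (A B : Matrix (Fin n) (Fin n) ℂ) : Prop :=
  LoewnerLE 1 (gmean A⁻¹ B (1/2))

/-- The spectral geometric mean `A ♮ₜ B = (A⁻¹ ♯ B)^t A (A⁻¹ ♯ B)^t`. -/
def smean {n : ℕ} (A B : Matrix (Fin n) (Fin n) ℂ) (t : ℝ) : Matrix (Fin n) (Fin n) ℂ :=
  mpow (gmean A⁻¹ B (1/2)) t * A * mpow (gmean A⁻¹ B (1/2)) t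

/-- The Wasserstein mean `A ◇ₜ B = [(1-t)I + t(A⁻¹ ♯ B)] A [(1-t)I + t(A⁻¹ ♯ B)]`. -/
def wmean {n : ℕ} (A B : Matrix (Fin n) (Fin n) ℂ) (t : ℝ) : Matrix (Fin n) (Fin n) ℂ :=
  (((1 - t : ℝ) : ℂ) • (1 : Matrix (Fin n) (Fin n) ℂ) + ((t : ℝ) : ℂ) • gmean A⁻¹ B (1/2)) * A *
    (((1 - t : ℝ) : ℂ) • (1 : Matrix (Fin n) (Fin n) ℂ) + ((t : ℝ) : ℂ) • gmean A⁻¹ B (1/2))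

/-- The arithmetic mean `A ∇ₜ B = (1-t)A + tB`. -/
def amean {n : ℕ} (A B : Matrix (Fin n) (Fin n) ℂ) (t : ℝ) : Matrix (Fin n) (Fin n) ℂ :=
  ((1 - t : ℝ) : ℂ) • A + ((t : ℝ) : ℂ) • B

/-- The matrix absolute value `|X| = (XᴴX)^{1/2}`. -/
def matAbs {n : ℕ} (X : Matrix (Fin n) (Fin n) ℂ) : Matrix (Fin n) (Fin n) ℂ :=
  mpow (Xᴴ * X) (1/2)

/-- The eigenvalues of a Hermitian matrix listed in nonincreasing order:
`eigDesc hA i` is `λ_{i+1}(A)`, so `eigDesc hA 0 = λ₁(A) ≥ eigDesc hA 1 = λ₂(A) ≥ ⋯`. -/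
def eigDesc {n : ℕ} {A : Matrix (Fin n) (Fin n) ℂ} (hA : A.IsHermitian) : Fin n → ℝ :=
  fun i => (hA.eigenvalues ∘ Tuple.sort hA.eigenvalues) i.rev

/-!
Write `S = |B^{1/2} A^{1/2}| = (A^{1/2} B A^{1/2})^{1/2}`. Conjugating by `A^{1/2}` turns
`A⁻¹ ♯ B` into `S`, hence `A^{1/2} (A ◇ₜ B) A^{1/2} = ((1-t)A + tS)²` and the right-hand side is the
arithmetic mean `A ∇ₜ S`. It remains to see `A ◇ₜ S ≤ A ∇ₜ S`: with `G = A⁻¹ ♯ S` the Riccati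
equation `G A G = S` gives `A ∇ₜ S - A ◇ₜ S = t(1-t) (I - G) A (I - G) ≥ 0`.
-/

open scoped MatrixOrder

section MatrixPower

variable {n : ℕ} {A : Matrix (Fin n) (Fin n) ℂ}

lemma continuousOn_real_spectrum (A : Matrix (Fin n) (Fin n) ℂ) (f : ℝ → ℝ) :
    ContinuousOn f (spectrum ℝ A) :=
  Matrix.finite_real_spectrum.continuousOn f

lemma mpow_isHermitian (A : Matrix (Fin n) (Fin n) ℂ) (t : ℝ) : (mpow A t).IsHermitian :=
  cfc_predicate (p := IsSelfAdjoint) _ A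

lemma mpow_posSemidef (hA : A.PosSemidef) (t : ℝ) : (mpow A t).PosSemidef :=
  Matrix.nonneg_iff_posSemidef.mp <|
    cfc_nonneg fun _ hx => Real.rpow_nonneg (spectrum_nonneg_of_nonneg hA.nonneg hx) t

lemma mpow_one (hA : A.IsHermitian) : mpow A 1 = A := by
  unfold mpow
  rw [cfc_congr fun x _ => Real.rpow_one x]
  exact cfc_id' ℝ A hA

lemma mpow_zero (hA : A.IsHermitian) : mpow A 0 = 1 := by
  unfold mpow
  rw [cfc_congr (g := 1) fun x _ => Real.rpow_zero x]
  exact cfc_one ℝ A hA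

lemma mpow_mul_mpow (hA : A.PosSemidef) {s t : ℝ} (hst : s + t ≠ 0) :
    mpow A s * mpow A t = mpow A (s + t) := by
  unfold mpow
  rw [← cfc_mul _ _ A (continuousOn_real_spectrum _ _) (continuousOn_real_spectrum _ _)]
  exact cfc_congr fun x hx =>
    (Real.rpow_add' (spectrum_nonneg_of_nonneg hA.nonneg hx) hst).symm

lemma mpow_mul_mpow_of_posDef (hA : A.PosDef) (s t : ℝ) :
    mpow A s * mpow A t = mpow A (s + t) := by
  unfold mpow
  rw [← cfc_mul _ _ A (continuousOn_real_spectrum _ _) (continuousOn_real_spectrum _ _)]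
  exact cfc_congr fun x hx =>
    (Real.rpow_add (hA.isStrictlyPositive.spectrum_pos hx) s t).symm

lemma mpow_mpow (hA : A.PosSemidef) (s t : ℝ) : mpow (mpow A s) t = mpow A (s * t) := by
  unfold mpow
  rw [← cfc_comp (fun x : ℝ => x ^ t) (fun x : ℝ => x ^ s) A hA.isHermitian.isSelfAdjoint
    ((Matrix.finite_real_spectrum.image _).continuousOn _) (continuousOn_real_spectrum _ _)]
  exact cfc_congr fun x hx =>
    (Real.rpow_mul (spectrum_nonneg_of_nonneg hA.nonneg hx) s t).symm

lemma mpow_half_mul_mpow_half (hA : A.PosSemidef) : mpow A (1/2) * mpow A (1/2) = A := by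
  rw [mpow_mul_mpow hA (by norm_num)]
  norm_num [mpow_one hA.isHermitian]

lemma mpow_half_mul_mpow_neg_half (hA : A.PosDef) : mpow A (1/2) * mpow A (-(1/2)) = 1 := by
  rw [mpow_mul_mpow_of_posDef hA]
  norm_num [mpow_zero hA.isHermitian]

lemma mpow_neg_half_mul_mpow_half (hA : A.PosDef) : mpow A (-(1/2)) * mpow A (1/2) = 1 := by
  rw [mpow_mul_mpow_of_posDef hA]
  norm_num [mpow_zero hA.isHermitian]

lemma mpow_half_conj_mpow_neg_half_conj (hA : A.PosDef) (X : Matrix (Fin n) (Fin n) ℂ) :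
    mpow A (1/2) * (mpow A (-(1/2)) * X * mpow A (-(1/2))) * mpow A (1/2) = X := by
  simp only [← Matrix.mul_assoc, mpow_half_mul_mpow_neg_half hA, Matrix.one_mul]
  rw [Matrix.mul_assoc, mpow_neg_half_mul_mpow_half hA, Matrix.mul_one]

lemma mpow_neg_half_conj_mpow_half_conj (hA : A.PosDef) (X : Matrix (Fin n) (Fin n) ℂ) :
    mpow A (-(1/2)) * (mpow A (1/2) * X * mpow A (1/2)) * mpow A (-(1/2)) = X := by
  simp only [← Matrix.mul_assoc, mpow_neg_half_mul_mpow_half hA, Matrix.one_mul]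
  rw [Matrix.mul_assoc, mpow_half_mul_mpow_neg_half hA, Matrix.mul_one]

lemma mpow_neg_half_mul_mul_mpow_neg_half (hA : A.PosDef) :
    mpow A (-(1/2)) * A * mpow A (-(1/2)) = 1 := by
  calc mpow A (-(1/2)) * A * mpow A (-(1/2))
      = mpow A (-(1/2)) * (mpow A (1/2) * 1 * mpow A (1/2)) * mpow A (-(1/2)) := by
        rw [Matrix.mul_one, mpow_half_mul_mpow_half hA.posSemidef]
    _ = 1 := mpow_neg_half_conj_mpow_half_conj hA 1

lemma mpow_inv (hA : A.PosDef) (t : ℝ) : mpow A⁻¹ t = mpow A (-t) := by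
  have hinv : A⁻¹ = mpow A (-1) := by
    refine Matrix.inv_eq_left_inv ?_
    rw [← mpow_one hA.isHermitian, mpow_mpow hA.posSemidef, mpow_mul_mpow_of_posDef hA]
    norm_num [mpow_zero hA.isHermitian]
  rw [hinv, mpow_mpow hA.posSemidef]
  ring_nf

lemma mpow_mul_self_half (hA : A.PosSemidef) : mpow (A * A) (1/2) = A := by
  conv_lhs => rw [← mpow_one hA.isHermitian]
  rw [mpow_mul_mpow hA (by norm_num), mpow_mpow hA]
  norm_num [mpow_one hA.isHermitian]

end MatrixPower

section Means

variable {n : ℕ} {A B C : Matrix (Fin n) (Fin n) ℂ}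

lemma matAbs_posSemidef (X : Matrix (Fin n) (Fin n) ℂ) : (matAbs X).PosSemidef :=
  mpow_posSemidef (Matrix.posSemidef_conjTranspose_mul_self X) _

lemma matAbs_mpow_half_mul_mpow_half (hC : C.PosSemidef) (A : Matrix (Fin n) (Fin n) ℂ) :
    matAbs (mpow C (1/2) * mpow A (1/2)) =
      mpow (mpow A (1/2) * C * mpow A (1/2)) (1/2) := by
  rw [matAbs, Matrix.conjTranspose_mul, (mpow_isHermitian _ _).eq, (mpow_isHermitian _ _).eq,
    Matrix.mul_assoc, ← Matrix.mul_assoc (mpow C _), mpow_half_mul_mpow_half hC,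
    ← Matrix.mul_assoc]

lemma gmean_isHermitian (A B : Matrix (Fin n) (Fin n) ℂ) (t : ℝ) : (gmean A B t).IsHermitian := by
  simp only [Matrix.IsHermitian, gmean, Matrix.conjTranspose_mul, (mpow_isHermitian _ _).eq,
    Matrix.mul_assoc]

lemma gmean_inv_left (hA : A.PosDef) (C : Matrix (Fin n) (Fin n) ℂ) :
    gmean A⁻¹ C (1/2) =
      mpow A (-(1/2)) * mpow (mpow A (1/2) * C * mpow A (1/2)) (1/2) * mpow A (-(1/2)) := by
  rw [gmean, mpow_inv hA, mpow_inv hA, neg_neg]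

lemma mpow_half_mul_gmean_inv_mul_mpow_half (hA : A.PosDef) (C : Matrix (Fin n) (Fin n) ℂ) :
    mpow A (1/2) * gmean A⁻¹ C (1/2) * mpow A (1/2) =
      mpow (mpow A (1/2) * C * mpow A (1/2)) (1/2) := by
  rw [gmean_inv_left hA, mpow_half_conj_mpow_neg_half_conj hA]

lemma gmean_inv_mul_mul_gmean_inv (hA : A.PosDef) (hC : C.PosSemidef) :
    gmean A⁻¹ C (1/2) * A * gmean A⁻¹ C (1/2) = C := by
  have hrCr : (mpow A (1/2) * C * mpow A (1/2)).PosSemidef := by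
    simpa only [(mpow_isHermitian A _).eq] using hC.mul_mul_conjTranspose_same (mpow A (1/2))
  have hgg := mpow_half_mul_mpow_half hrCr
  rw [gmean_inv_left hA]
  generalize mpow (mpow A (1/2) * C * mpow A (1/2)) (1/2) = g at hgg ⊢
  calc mpow A (-(1/2)) * g * mpow A (-(1/2)) * A * (mpow A (-(1/2)) * g * mpow A (-(1/2)))
      = mpow A (-(1/2)) * g * (mpow A (-(1/2)) * A * mpow A (-(1/2))) * g * mpow A (-(1/2)) := by
        simp only [Matrix.mul_assoc]
    _ = mpow A (-(1/2)) * (mpow A (1/2) * C * mpow A (1/2)) * mpow A (-(1/2)) := by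
        rw [mpow_neg_half_mul_mul_mpow_neg_half hA, Matrix.mul_one, Matrix.mul_assoc _ g g, hgg]
    _ = C := mpow_neg_half_conj_mpow_half_conj hA C

end Means

section Wasserstein

variable {n : ℕ} {A B : Matrix (Fin n) (Fin n) ℂ} {t : ℝ}

lemma wmean_eq_amean_one_mul_mul (A B : Matrix (Fin n) (Fin n) ℂ) (t : ℝ) :
    wmean A B t = amean 1 (gmean A⁻¹ B (1/2)) t * A * amean 1 (gmean A⁻¹ B (1/2)) t :=
  rfl

lemma mul_amean_mul (X Y : Matrix (Fin n) (Fin n) ℂ) :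
    X * amean A B t * Y = amean (X * A * Y) (X * B * Y) t := by
  simp only [amean, Matrix.mul_add, Matrix.add_mul, mul_smul_comm, smul_mul_assoc]

lemma amean_isHermitian (hA : A.IsHermitian) (hB : B.IsHermitian) (t : ℝ) :
    (amean A B t).IsHermitian :=
  (hA.smul (Complex.conj_ofReal _)).add (hB.smul (Complex.conj_ofReal _))

lemma amean_posSemidef (hA : A.PosSemidef) (hB : B.PosSemidef) (ht0 : 0 ≤ t) (ht1 : t ≤ 1) :
    (amean A B t).PosSemidef :=
  (hA.smul (Complex.zero_le_real.mpr (sub_nonneg.mpr ht1))).add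
    (hB.smul (Complex.zero_le_real.mpr ht0))

lemma wmean_posSemidef (hA : A.PosSemidef) (B : Matrix (Fin n) (Fin n) ℂ) (t : ℝ) :
    (wmean A B t).PosSemidef := by
  have hM := amean_isHermitian Matrix.isHermitian_one (gmean_isHermitian A⁻¹ B (1/2)) t
  simpa only [wmean_eq_amean_one_mul_mul, hM.eq] using
    hA.mul_mul_conjTranspose_same (amean 1 (gmean A⁻¹ B (1/2)) t)

lemma amean_sub_wmean (hGAG : gmean A⁻¹ B (1/2) * A * gmean A⁻¹ B (1/2) = B) (t : ℝ) :
    amean A B t - wmean A B t =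
      ((t * (1 - t) : ℝ) : ℂ) • ((1 - gmean A⁻¹ B (1/2)) * A * (1 - gmean A⁻¹ B (1/2))) := by
  rw [amean, wmean]
  generalize gmean A⁻¹ B (1/2) = G at hGAG ⊢
  subst hGAG
  push_cast
  generalize (t : ℂ) = d
  simp only [Matrix.mul_add, Matrix.add_mul, Matrix.sub_mul, Matrix.mul_sub, mul_smul_comm,
    smul_mul_assoc, Matrix.one_mul, Matrix.mul_one, Matrix.mul_assoc]
  module

theorem wmean_le_amean (hA : A.PosDef) (hB : B.PosSemidef) (ht0 : 0 ≤ t) (ht1 : t ≤ 1) :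
    LoewnerLE (wmean A B t) (amean A B t) := by
  rw [LoewnerLE, amean_sub_wmean (gmean_inv_mul_mul_gmean_inv hA hB)]
  have hps := hA.posSemidef.mul_mul_conjTranspose_same (1 - gmean A⁻¹ B (1/2))
  rw [Matrix.conjTranspose_sub, Matrix.conjTranspose_one, (gmean_isHermitian _ _ _).eq] at hps
  exact hps.smul (Complex.zero_le_real.mpr (by nlinarith))

lemma mpow_half_mul_wmean_mul_mpow_half (hA : A.PosDef) (B : Matrix (Fin n) (Fin n) ℂ) (t : ℝ) :
    mpow A (1/2) * wmean A B t * mpow A (1/2) =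
      amean A (mpow (mpow A (1/2) * B * mpow A (1/2)) (1/2)) t *
        amean A (mpow (mpow A (1/2) * B * mpow A (1/2)) (1/2)) t := by
  have hconj : mpow A (1/2) * amean 1 (gmean A⁻¹ B (1/2)) t * mpow A (1/2) =
      amean A (mpow (mpow A (1/2) * B * mpow A (1/2)) (1/2)) t := by
    rw [mul_amean_mul, Matrix.mul_one, mpow_half_mul_mpow_half hA.posSemidef,
      mpow_half_mul_gmean_inv_mul_mpow_half hA]
  rw [← hconj, wmean_eq_amean_one_mul_mul]
  calc mpow A (1/2) * (amean 1 (gmean A⁻¹ B (1/2)) t * A * amean 1 (gmean A⁻¹ B (1/2)) t) *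
        mpow A (1/2)
      = mpow A (1/2) * (amean 1 (gmean A⁻¹ B (1/2)) t * (mpow A (1/2) * mpow A (1/2)) *
          amean 1 (gmean A⁻¹ B (1/2)) t) * mpow A (1/2) := by
        rw [mpow_half_mul_mpow_half hA.posSemidef]
    _ = _ := by simp only [Matrix.mul_assoc]

lemma matAbs_mpow_wmean_mul_mpow_half (hA : A.PosDef) (hB : B.PosSemidef) (ht0 : 0 ≤ t)
    (ht1 : t ≤ 1) :
    matAbs (mpow (wmean A B t) (1/2) * mpow A (1/2)) =
      amean A (matAbs (mpow B (1/2) * mpow A (1/2))) t := by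
  have hS : (mpow (mpow A (1/2) * B * mpow A (1/2)) (1/2)).PosSemidef := by
    refine mpow_posSemidef ?_ _
    simpa only [(mpow_isHermitian A _).eq] using hB.mul_mul_conjTranspose_same (mpow A (1/2))
  rw [matAbs_mpow_half_mul_mpow_half (wmean_posSemidef hA.posSemidef B t),
    mpow_half_mul_wmean_mul_mpow_half hA, matAbs_mpow_half_mul_mpow_half hB,
    mpow_mul_self_half (amean_posSemidef hA.posSemidef hS ht0 ht1)]

end Wasserstein

/-- for `t ∈ (0,1)`,
`|(A ◇ₜ B)^{1/2} A^{1/2}| ≥ A ◇ₜ |B^{1/2} A^{1/2}|` in the Loewner order. -/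
theorem abs_wmean_ge_wmean_abs {n : ℕ} (A B : Matrix (Fin n) (Fin n) ℂ)
    (hA : A.PosDef) (hB : B.PosDef) :
    ∀ t : ℝ, 0 < t → t < 1 →
      LoewnerLE (wmean A (matAbs (mpow B (1/2) * mpow A (1/2))) t)
        (matAbs (mpow (wmean A B t) (1/2) * mpow A (1/2))) := by
  intro t ht0 ht1
  rw [matAbs_mpow_wmean_mul_mpow_half hA hB.posSemidef ht0.le ht1.le]
  exact wmean_le_amean hA (matAbs_posSemidef _) ht0.le ht1.le
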